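/- arXiv:math/0204347 — 3 statements merged into one kernel-verified Lean document; each statement's English description precedes it below -/
import Mathlib

section
/- Let A be a 2×2 integer matrix preserving the form [[1,0],[0,-1]]. If l > e > 0 and l' > e' > 0 are real numbers with A mapping (l,e) to (l',e'), then l = l' and e = e'. -/
/-! Over `ℤ`, `a² - c² = (a - c)(a + c) = 1` forces `a - c = a + c = ±1`, hence `c = 0`. So a
form-preserving integer matrix is diagonal with entries `±1`, and since it maps a vector with
positive coordinates to another one, both signs are `+1`. -/

lemma Int.isUnit_and_eq_zero_of_sq_sub_sq_eq_one {a c : ℤ} (h : a ^ 2 - c ^ 2 = 1) :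
    IsUnit a ∧ c = 0 := by
  have hfac : (a - c) * (a + c) = 1 := by rw [← h]; ring
  have hc : c = 0 := by
    rcases Int.mul_eq_one_iff_eq_one_or_neg_one.mp hfac with ⟨h₁, h₂⟩ | ⟨h₁, h₂⟩ <;> omega
  subst hc
  exact ⟨Int.isUnit_iff_natAbs_eq.mpr (by simpa [Int.natAbs_pow] using congrArg Int.natAbs h), rfl⟩

lemma Matrix.isUnit_diag_of_transpose_mul_mul_self {A : Matrix (Fin 2) (Fin 2) ℤ}
    (hA : A.transpose * !![1, 0; 0, -1] * A = !![1, 0; 0, -1]) :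
    (IsUnit (A 0 0) ∧ A 1 0 = 0) ∧ (IsUnit (A 1 1) ∧ A 0 1 = 0) := by
  have h₀₀ := congrFun (congrFun hA 0) 0
  have h₁₁ := congrFun (congrFun hA 1) 1
  simp only [Matrix.mul_apply, Fin.sum_univ_two, Matrix.transpose_apply, Matrix.of_apply,
    Matrix.cons_val', Matrix.cons_val_zero, Matrix.cons_val_one, Matrix.empty_val',
    Matrix.cons_val_fin_one] at h₀₀ h₁₁
  exact ⟨Int.isUnit_and_eq_zero_of_sq_sub_sq_eq_one (by linear_combination h₀₀),
    Int.isUnit_and_eq_zero_of_sq_sub_sq_eq_one (by linear_combination -h₁₁)⟩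

lemma Int.eq_of_isUnit_cast_mul_eq {u : ℤ} (hu : IsUnit u) {x y : ℝ} (hx : 0 < x) (hy : 0 < y)
    (h : u * x = y) : x = y := by
  rcases Int.isUnit_iff.mp hu with rfl | rfl
  · simpa using h
  · push_cast at h; linarith

/-- An integer matrix preserving the form `[[1,0],[0,-1]]` cannot map
`(l,e)` with `l > e > 0` to a different `(l',e')` with `l' > e' > 0`. -/
theorem stmt_3 (A : Matrix (Fin 2) (Fin 2) ℤ)
    (hA : A.transpose * !![1, 0; 0, -1] * A = !![1, 0; 0, -1])
    (l e l' e' : ℝ) (hle : l > e) (he : e > 0) (hle' : l' > e') (he' : e' > 0)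
    (hmap : (A.map (Int.cast : ℤ → ℝ)).mulVec ![l, e] = ![l', e']) :
    l = l' ∧ e = e' := by
  obtain ⟨⟨hu₀, h₁₀⟩, ⟨hu₁, h₀₁⟩⟩ := Matrix.isUnit_diag_of_transpose_mul_mul_self hA
  have hl : A 0 0 * l = l' := by
    simpa [Matrix.mulVec, dotProduct, Fin.sum_univ_two, h₀₁] using congrFun hmap 0
  have he_eq : A 1 1 * e = e' := by
    simpa [Matrix.mulVec, dotProduct, Fin.sum_univ_two, h₁₀] using congrFun hmap 1
  exact ⟨Int.eq_of_isUnit_cast_mul_eq hu₀ (by linarith) (by linarith) hl,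
    Int.eq_of_isUnit_cast_mul_eq hu₁ he he' he_eq⟩
end

section
/- Let u₁, u₂, u₃, u₄ ∈ ℤ² satisfy det(u₁,u₂) = det(u₂,u₃) = det(u₃,u₄) = det(u₄,u₁) = 1 (where det(u,v) denotes the determinant of the 2×2 matrix with columns u and v). If u₁ = (1,0) and u₂ = (0,1), then u₃ = (-1,k) and u₄ = (l,-1) for some integers k, l with k·l = 0. -/
theorem stmt_4_general (u₁ u₂ u₃ u₄ : ℤ × ℤ)
    (h₂₃ : u₂.1 * u₃.2 - u₂.2 * u₃.1 = 1)
    (h₃₄ : u₃.1 * u₄.2 - u₃.2 * u₄.1 = 1)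
    (h₄₁ : u₄.1 * u₁.2 - u₄.2 * u₁.1 = 1)
    (hu₁ : u₁ = (1, 0)) (hu₂ : u₂ = (0, 1)) :
    ∃ k l : ℤ, u₃ = (-1, k) ∧ u₄ = (l, -1) ∧ k * l = 0 := by
  subst hu₁ hu₂
  obtain ⟨a, k⟩ := u₃
  obtain ⟨l, b⟩ := u₄
  obtain rfl : a = -1 := by simp at h₂₃; omega
  obtain rfl : b = -1 := by simp at h₄₁; omega
  exact ⟨k, l, rfl, rfl, by linarith⟩

/-- For inward normals of a four-edged Delzant polygon with `u₁ = (1,0)`,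
`u₂ = (0,1)`: we get `u₃ = (-1,k)` and `u₄ = (l,-1)` with `k·l = 0`. -/
theorem stmt_4 (u₁ u₂ u₃ u₄ : ℤ × ℤ)
    (h₁₂ : u₁.1 * u₂.2 - u₁.2 * u₂.1 = 1)
    (h₂₃ : u₂.1 * u₃.2 - u₂.2 * u₃.1 = 1)
    (h₃₄ : u₃.1 * u₄.2 - u₃.2 * u₄.1 = 1)
    (h₄₁ : u₄.1 * u₁.2 - u₄.2 * u₁.1 = 1)
    (hu₁ : u₁ = (1, 0)) (hu₂ : u₂ = (0, 1)) :
    ∃ k l : ℤ, u₃ = (-1, k) ∧ u₄ = (l, -1) ∧ k * l = 0 :=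
  stmt_4_general u₁ u₂ u₃ u₄ h₂₃ h₃₄ h₄₁ hu₁ hu₂
end

section
/- Let u₁, u₂, u₃, u₄ ∈ ℤ² satisfy det(uᵢ, u_{i+1}) = 1 for i = 1,2,3,4 (indices mod 4). Then there exists a matrix R ∈ GL(2,ℤ) (an integer matrix with determinant ±1) such that R·u₁ = (1,0), R·u₂ = (0,1), and either R·u₃ = (-1,0) or R·u₄ = (0,-1). -/
/-!
Let `R` be the inverse of the matrix with columns `u₁, u₂`; it sends `v` to
`(det(v, u₂), det(u₁, v))`, so `R u₃ = (-1, det(u₁, u₃))` and `R u₄ = (det(u₄, u₂), -1)`.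
The Plücker relation
`det(u₁,u₂) det(u₃,u₄) - det(u₁,u₃) det(u₂,u₄) + det(u₁,u₄) det(u₂,u₃) = 0`
together with the four unimodularity conditions gives `det(u₁,u₃) det(u₂,u₄) = 0`.
-/

namespace Plane

def wedge (u v : Fin 2 → ℤ) : ℤ := u 0 * v 1 - u 1 * v 0

lemma wedge_self (u : Fin 2 → ℤ) : wedge u u = 0 := by
  unfold wedge; ring

lemma wedge_swap (u v : Fin 2 → ℤ) : wedge v u = -wedge u v := by
  unfold wedge; ring

lemma wedge_plucker (u v w x : Fin 2 → ℤ) :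
    wedge u v * wedge w x - wedge u w * wedge v x + wedge u x * wedge v w = 0 := by
  unfold wedge; ring

def adjugateOfColumns (u v : Fin 2 → ℤ) : Matrix (Fin 2) (Fin 2) ℤ :=
  !![v 1, -v 0; -u 1, u 0]

lemma det_adjugateOfColumns (u v : Fin 2 → ℤ) :
    (adjugateOfColumns u v).det = wedge u v := by
  simp only [adjugateOfColumns, Matrix.det_fin_two_of, wedge]
  ring

lemma adjugateOfColumns_mulVec (u v w : Fin 2 → ℤ) :
    (adjugateOfColumns u v).mulVec w = ![wedge w v, wedge u w] := by
  ext i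
  fin_cases i <;>
    simp [adjugateOfColumns, Matrix.mulVec, dotProduct, Fin.sum_univ_two, wedge] <;> ring

end Plane

open Plane in
/-- Normals of a four-edged Delzant polygon can be normalized by `GL(2,ℤ)` so
that `u₁ ↦ (1,0)`, `u₂ ↦ (0,1)`, and `u₃ ↦ (-1,0)` or `u₄ ↦ (0,-1)`. -/
theorem stmt_5 (u₁ u₂ u₃ u₄ : Fin 2 → ℤ)
    (h₁₂ : u₁ 0 * u₂ 1 - u₁ 1 * u₂ 0 = 1)
    (h₂₃ : u₂ 0 * u₃ 1 - u₂ 1 * u₃ 0 = 1)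
    (h₃₄ : u₃ 0 * u₄ 1 - u₃ 1 * u₄ 0 = 1)
    (h₄₁ : u₄ 0 * u₁ 1 - u₄ 1 * u₁ 0 = 1) :
    ∃ R : Matrix (Fin 2) (Fin 2) ℤ, (R.det = 1 ∨ R.det = -1) ∧
      R.mulVec u₁ = ![1, 0] ∧ R.mulVec u₂ = ![0, 1] ∧
      (R.mulVec u₃ = ![-1, 0] ∨ R.mulVec u₄ = ![0, -1]) := by
  change wedge u₁ u₂ = 1 at h₁₂
  change wedge u₂ u₃ = 1 at h₂₃
  change wedge u₃ u₄ = 1 at h₃₄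
  change wedge u₄ u₁ = 1 at h₄₁
  have h₃₂ : wedge u₃ u₂ = -1 := by rw [wedge_swap, h₂₃]
  have h₁₄ : wedge u₁ u₄ = -1 := by rw [wedge_swap, h₄₁]
  have hdiag : wedge u₁ u₃ * wedge u₂ u₄ = 0 := by
    have := wedge_plucker u₁ u₂ u₃ u₄
    rw [h₁₂, h₃₄, h₁₄, h₂₃] at this
    linarith
  refine ⟨adjugateOfColumns u₁ u₂, .inl (by rw [det_adjugateOfColumns, h₁₂]), ?_, ?_, ?_⟩
  · rw [adjugateOfColumns_mulVec, h₁₂, wedge_self]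
  · rw [adjugateOfColumns_mulVec, h₁₂, wedge_self]
  · simp only [adjugateOfColumns_mulVec]
    rcases mul_eq_zero.mp hdiag with h₁₃ | h₂₄
    · exact .inl (by rw [h₃₂, h₁₃])
    · exact .inr (by rw [wedge_swap u₂, h₂₄, h₁₄, neg_zero])
end
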